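/- arXiv:1605.08820 — 2 statements merged into one kernel-verified Lean document; each statement's English description precedes it below -/
import Mathlib

section
/- Let G be a commutative group (written multiplicatively) and let M be a divisible abelian group (written additively), regarded as a trivial G-module. Every symmetric 2-cocycle f : G × G → M is a 2-coboundary: there exists g : G → M with f(x,y) = g(x) + g(y) − g(x*y) for all x,y ∈ G. (This is the proof content of the paper's Lemma 2.2, whose argument uses only that the coefficient group ℚ̄ℓˣ is divisible, via the vanishing of Ext¹ently of divisible groups.) -/
/-!
A symmetric 2-cocycle `f` defines an abelian extension `0 → M → E → G → 1`: on `M × G` put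
`(a, x) + (b, y) = (a + b + f x y, x * y)`. Since a divisible group is an injective `ℤ`-module,
the inclusion of `M` has a retraction `s : E →+ M`, and `g x := s (0, x)` satisfies
`g x + g y - g (x * y) = f x y` because `(0, x) + (0, y) - (0, x * y)` lies in the image of `M`
and corresponds to `f x y` there.
-/

structure SymmTwoCocycle (G M : Type*) [CommGroup G] [AddCommGroup M] where
  toFun : G → G → M
  cocycle : ∀ x y z : G, toFun y z - toFun (x * y) z + toFun x (y * z) - toFun x y = 0
  symm : ∀ x y : G, toFun x y = toFun y x

def IsTwoCoboundary {G M : Type*} [Mul G] [AddCommGroup M] (f : G → G → M) : Prop :=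
  ∃ g : G → M, ∀ x y : G, f x y = g x + g y - g (x * y)

namespace SymmTwoCocycle

variable {G M : Type*} [CommGroup G] [AddCommGroup M] (f : SymmTwoCocycle G M)

instance : CoeFun (SymmTwoCocycle G M) fun _ => G → G → M := ⟨toFun⟩

theorem add_apply_mul (x y z : G) : f x y + f (x * y) z = f x (y * z) + f y z := by
  linear_combination (norm := abel) -f.cocycle x y z

theorem apply_one_left (x : G) : f 1 x = f 1 1 := by
  have h := f.add_apply_mul 1 1 x
  rw [one_mul, one_mul] at h
  exact (add_right_cancel h).symm

theorem apply_one_right (x : G) : f x 1 = f 1 1 := by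
  rw [f.symm, apply_one_left]

/-- `f` need not be normalized, so the zero of this extension is `⟨-f 1 1, 1⟩`. -/
@[ext]
structure Ext (_ : SymmTwoCocycle G M) where
  fst : M
  snd : G

namespace Ext

variable {f}

instance : Zero f.Ext := ⟨⟨-f 1 1, 1⟩⟩

instance : Add f.Ext := ⟨fun a b => ⟨a.fst + b.fst + f a.snd b.snd, a.snd * b.snd⟩⟩

instance : Neg f.Ext := ⟨fun a => ⟨-a.fst - f a.snd a.snd⁻¹ - f 1 1, a.snd⁻¹⟩⟩

@[simp] theorem fst_zero : (0 : f.Ext).fst = -f 1 1 := rfl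
@[simp] theorem snd_zero : (0 : f.Ext).snd = 1 := rfl
@[simp] theorem fst_add (a b : f.Ext) : (a + b).fst = a.fst + b.fst + f a.snd b.snd := rfl
@[simp] theorem snd_add (a b : f.Ext) : (a + b).snd = a.snd * b.snd := rfl
@[simp] theorem fst_neg (a : f.Ext) : (-a).fst = -a.fst - f a.snd a.snd⁻¹ - f 1 1 := rfl
@[simp] theorem snd_neg (a : f.Ext) : (-a).snd = a.snd⁻¹ := rfl

instance : AddCommGroup f.Ext where
  nsmul := nsmulRec
  zsmul := zsmulRec
  add_assoc a b c := Ext.ext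
    (by simp only [fst_add, snd_add]
        linear_combination (norm := abel) f.add_apply_mul a.snd b.snd c.snd)
    (mul_assoc _ _ _)
  zero_add a := Ext.ext
    (by simp only [fst_add, fst_zero, snd_zero, f.apply_one_left]; abel) (one_mul _)
  add_zero a := Ext.ext
    (by simp only [fst_add, fst_zero, snd_zero, f.apply_one_right]; abel) (mul_one _)
  neg_add_cancel a := Ext.ext
    (by simp only [fst_add, fst_neg, snd_neg, fst_zero, f.symm a.snd⁻¹]; abel)
    (inv_mul_cancel _)
  add_comm a b := Ext.ext
    (by simp only [fst_add, f.symm a.snd]; abel) (mul_comm _ _)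

def inl : M →+ f.Ext where
  toFun m := ⟨m - f 1 1, 1⟩
  map_zero' := Ext.ext (zero_sub _) rfl
  map_add' m n := Ext.ext
    (by simp only [fst_add]; abel) (one_mul 1).symm

@[simp] theorem fst_inl (m : M) : (inl m : f.Ext).fst = m - f 1 1 := rfl
@[simp] theorem snd_inl (m : M) : (inl m : f.Ext).snd = 1 := rfl

theorem inl_injective : Function.Injective (inl : M →+ f.Ext) := fun m n h => by
  simpa only [fst_inl, sub_left_inj] using congrArg Ext.fst h

theorem mk_zero_add_mk_zero (x y : G) :
    (⟨0, x⟩ + ⟨0, y⟩ : f.Ext) = inl (f x y) + ⟨0, x * y⟩ := Ext.ext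
  (by simp only [fst_add, fst_inl, snd_inl, f.apply_one_left]; abel)
  (one_mul _).symm

end Ext

theorem isTwoCoboundary_of_baer (hM : Module.Baer ℤ M) : IsTwoCoboundary f := by
  obtain ⟨s, hs⟩ :=
    hM.extension_property_addMonoidHom (Ext.inl : M →+ f.Ext) Ext.inl_injective (.id M)
  refine ⟨fun x => s ⟨0, x⟩, fun x y => ?_⟩
  have hsplit := congrArg s (Ext.mk_zero_add_mk_zero x y)
  rw [map_add, map_add, ← AddMonoidHom.comp_apply, hs, AddMonoidHom.id_apply] at hsplit
  rw [hsplit, add_sub_cancel_right]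

end SymmTwoCocycle

/-- Every symmetric 2-cocycle on a commutative group `G` with values in a divisible
abelian group `M` (trivial `G`-action) is a 2-coboundary. -/
theorem symmetric_two_cocycle_is_coboundary_divisible
    (G M : Type*) [CommGroup G] [AddCommGroup M]
    (hdiv : ∀ (m : M) (n : ℕ), 0 < n → ∃ x : M, n • x = m)
    (f : G → G → M)
    (hcoc : ∀ x y z : G,
      f y z - f (x * y) z + f x (y * z) - f x y = 0)
    (hsym : ∀ x y : G, f x y = f y x) :
    ∃ g : G → M, ∀ x y : G, f x y = g x + g y - g (x * y) := by
  let : DivisibleBy M ℕ :=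
    divisibleByOfSMulRightSurj M ℕ fun hn m => hdiv m _ (Nat.pos_of_ne_zero hn)
  let : DivisibleBy M ℤ := AddGroup.divisibleByIntOfDivisibleByNat M
  exact (SymmTwoCocycle.mk f hcoc hsym).isTwoCoboundary_of_baer (Module.Baer.of_divisible M)
end

section
/- Let G be a commutative group (written multiplicatively) and M a divisible abelian group (written additively), regarded as a trivial G-module. If f and f′ are 2-cocycles on G with values in M whose antisymmetrizations agree, i.e. f(x,y) − f(y,x) = f′(x,y) − f′(y,x) for all x,y ∈ G, then f and f′ are cohomologous: there exists g : G → M with f(x,y) − f′(x,y) = g(x) + g(y) − g(x*y) for all x,y ∈ G. (This is the injectivity, for divisible coefficients, of the antisymmetrization map H²(G, M) → Hom(∧²G, M) arising from the universal coefficient sequence in the proof of Lemma 2.2.) -/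
/-!
The difference `d = f - f'` is a 2-cocycle which, by the hypothesis on antisymmetrizations, is
symmetric. After normalizing it (`d 1 y = 0`), a symmetric cocycle is exactly what is needed to
make `M × G` with `(a, x) + (b, y) = (a + b + d x y, x * y)` an abelian group, an extension of `G`
by `M`. A divisible group is an injective `ℤ`-module, so the inclusion `a ↦ (a, 1)` has a
retraction `r`, and `g x := r (0, x)` satisfies `d x y = g x + g y - g (x * y)` because
`(0, x) + (0, y) = (d x y, 1) + (0, x * y)`.
-/

open Function

def IsTwoCocycle {G M : Type*} [Mul G] [AddCommGroup M] (f : G → G → M) : Prop :=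
  ∀ x y z : G, f y z - f (x * y) z + f x (y * z) - f x y = 0

namespace IsTwoCocycle

variable {G M : Type*} [AddCommGroup M] {f f' : G → G → M}

lemma sub [Mul G] (hf : IsTwoCocycle f) (hf' : IsTwoCocycle f') : IsTwoCocycle (f - f') :=
  fun x y z => calc
    _ = (f y z - f (x * y) z + f x (y * z) - f x y)
        - (f' y z - f' (x * y) z + f' x (y * z) - f' x y) := by simp only [Pi.sub_apply]; abel
    _ = 0 := by rw [hf, hf', sub_zero]

lemma apply_one_left [MulOneClass G] (hf : IsTwoCocycle f) (y : G) : f 1 y = f 1 1 := by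
  have h := hf 1 1 y
  rw [one_mul, one_mul] at h
  rwa [sub_add_cancel, sub_eq_zero] at h

end IsTwoCocycle

structure NormalizedSymmCocycle (G M : Type*) [MulOneClass G] [AddCommGroup M] where
  toFun : G → G → M
  isTwoCocycle : IsTwoCocycle toFun
  symm : ∀ x y : G, toFun x y = toFun y x
  apply_one_left : ∀ y : G, toFun 1 y = 0

def IsTwoCocycle.normalize {G M : Type*} [MulOneClass G] [AddCommGroup M] {f : G → G → M}
    (hf : IsTwoCocycle f) (hsymm : ∀ x y : G, f x y = f y x) : NormalizedSymmCocycle G M where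
  toFun x y := f x y - f 1 1
  isTwoCocycle x y z := by
    beta_reduce
    rw [← hf x y z]
    abel
  symm x y := by rw [hsymm]
  apply_one_left y := by rw [hf.apply_one_left, sub_self]

namespace NormalizedSymmCocycle

variable {G M : Type*} [AddCommGroup M]

instance [MulOneClass G] : CoeFun (NormalizedSymmCocycle G M) (fun _ => G → G → M) :=
  ⟨toFun⟩

lemma apply_one_right [MulOneClass G] (d : NormalizedSymmCocycle G M) (x : G) : d x 1 = 0 :=
  (d.symm x 1).trans (d.apply_one_left x)

variable [CommGroup G] (d : NormalizedSymmCocycle G M)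

@[ext]
structure Extension (d : NormalizedSymmCocycle G M) where
  fst : M
  snd : G

namespace Extension

instance : Add d.Extension := ⟨fun p q => ⟨p.fst + q.fst + d p.snd q.snd, p.snd * q.snd⟩⟩

instance : Zero d.Extension := ⟨⟨0, 1⟩⟩

instance : Neg d.Extension := ⟨fun p => ⟨-p.fst - d p.snd p.snd⁻¹, p.snd⁻¹⟩⟩

instance : AddCommGroup d.Extension where
  nsmul := nsmulRec
  zsmul := zsmulRec
  add_assoc p q r := by
    ext
    · show p.fst + q.fst + d p.snd q.snd + r.fst + d (p.snd * q.snd) r.snd =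
        p.fst + (q.fst + r.fst + d q.snd r.snd) + d p.snd (q.snd * r.snd)
      rw [← sub_eq_zero, ← neg_eq_zero, ← d.isTwoCocycle p.snd q.snd r.snd]
      abel
    · exact mul_assoc _ _ _
  zero_add p := by
    ext
    · show 0 + p.fst + d 1 p.snd = p.fst
      rw [d.apply_one_left, zero_add, add_zero]
    · exact one_mul _
  add_zero p := by
    ext
    · show p.fst + 0 + d p.snd 1 = p.fst
      rw [d.apply_one_right, add_zero, add_zero]
    · exact mul_one _
  neg_add_cancel p := by
    ext
    · show -p.fst - d p.snd p.snd⁻¹ + p.fst + d p.snd⁻¹ p.snd = 0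
      rw [d.symm p.snd⁻¹]
      abel
    · exact inv_mul_cancel _
  add_comm p q := by
    ext
    · show p.fst + q.fst + d p.snd q.snd = q.fst + p.fst + d q.snd p.snd
      rw [d.symm, add_comm p.fst]
    · exact mul_comm _ _

lemma add_def (p q : d.Extension) :
    p + q = ⟨p.fst + q.fst + d p.snd q.snd, p.snd * q.snd⟩ :=
  rfl

def inl : M →+ d.Extension where
  toFun a := ⟨a, 1⟩
  map_zero' := rfl
  map_add' a b := by
    rw [add_def, d.apply_one_right, add_zero, mul_one]

lemma inl_injective : Injective (inl d) :=
  fun _ _ h => congrArg fst h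

lemma mk_zero_add_mk_zero (x y : G) :
    (⟨0, x⟩ + ⟨0, y⟩ : d.Extension) = inl d (d x y) + ⟨0, x * y⟩ := by
  simp only [add_def, inl, AddMonoidHom.coe_mk, ZeroHom.coe_mk, d.apply_one_left, one_mul]
  ext <;> simp

end Extension

theorem exists_eq_coboundary [DivisibleBy M ℤ] :
    ∃ g : G → M, ∀ x y : G, d x y = g x + g y - g (x * y) := by
  obtain ⟨r, hr⟩ := (Module.Baer.of_divisible M).extension_property_addMonoidHom
    (Extension.inl d) (Extension.inl_injective d) (AddMonoidHom.id M)
  refine ⟨fun x => r ⟨0, x⟩, fun x y => ?_⟩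
  have hrinl : r (Extension.inl d (d x y)) = d x y := DFunLike.congr_fun hr (d x y)
  rw [← map_add, Extension.mk_zero_add_mk_zero, map_add, hrinl, add_sub_cancel_right]

end NormalizedSymmCocycle

/-- For divisible coefficients, two 2-cocycles on a commutative group with the same
antisymmetrization are cohomologous. -/
theorem cocycles_with_same_antisymmetrization_cohomologous
    (G M : Type*) [CommGroup G] [AddCommGroup M]
    (hdiv : ∀ (m : M) (n : ℕ), 0 < n → ∃ x : M, n • x = m)
    (f f' : G → G → M)
    (hcoc : ∀ x y z : G,
      f y z - f (x * y) z + f x (y * z) - f x y = 0)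
    (hcoc' : ∀ x y z : G,
      f' y z - f' (x * y) z + f' x (y * z) - f' x y = 0)
    (hanti : ∀ x y : G, f x y - f y x = f' x y - f' y x) :
    ∃ g : G → M, ∀ x y : G, f x y - f' x y = g x + g y - g (x * y) := by
  let : DivisibleBy M ℕ :=
    divisibleByOfSMulRightSurj M ℕ fun hn m => hdiv m _ (Nat.pos_of_ne_zero hn)
  let : DivisibleBy M ℤ := AddGroup.divisibleByIntOfDivisibleByNat M
  have hsymm : ∀ x y : G, (f - f') x y = (f - f') y x := fun x y =>
    sub_eq_sub_iff_sub_eq_sub.mp (hanti x y)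
  obtain ⟨g, hg⟩ := ((IsTwoCocycle.sub hcoc hcoc').normalize hsymm).exists_eq_coboundary
  refine ⟨fun x => g x + (f 1 1 - f' 1 1), fun x y => ?_⟩
  have hdxy : f x y - f' x y - (f 1 1 - f' 1 1) = g x + g y - g (x * y) := hg x y
  rw [sub_eq_iff_eq_add.mp hdxy]
  beta_reduce
  abel
end
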